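/- Let k > 1 and W ⊂ ℝ⁴ the plane spanned (at parameter v) by u₁ = (1,0,0,0) and u₂ = (0, k sinh v, 1, k cosh v), with J₁(x₁,x₂,x₃,x₄) = (x₃,x₄,x₁,x₂) and g₂ = diag(-1,1,1,-1). Then the tangential endomorphism P of J₁ on W satisfies P² = (1/(1-k²))·Id on W, and both g₂(u₁,u₁) < 0 and g₂(u₂,u₂) < 0, so W is time-like (negative definite). -/

import Mathlib

/-!
Write e₁ = (1,0,0,0) and e₂ = (0, k sinh v, 1, k cosh v). Then g₂(e₁,e₁) = -1,
g₂(e₂,e₂) = 1 - k² (by cosh² - sinh² = 1) and g₂(e₁,e₂) = 0, so the g₂-orthogonal projection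
onto W = span{e₁, e₂} is given by the usual coefficient formula. As g₂(J₁e₁, e₂) = 1,
g₂(J₁e₂, e₁) = -1 and J₁eᵢ is g₂-orthogonal to eᵢ, this gives
P(a e₁ + b e₂) = b e₁ + a/(1-k²) e₂, whose square is multiplication by 1/(1-k²).
-/

def J1 (v : Fin 4 → ℝ) : Fin 4 → ℝ := ![v 2, v 3, v 0, v 1]

def g2 (v w : Fin 4 → ℝ) : ℝ := -(v 0 * w 0) + v 1 * w 1 + v 2 * w 2 - v 3 * w 3

open Real Submodule

theorem LinearMap.BilinForm.eq_of_mem_span_pair_of_sub_orthogonal {K V : Type*} [Field K]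
    [AddCommGroup V] [Module K V] (B : LinearMap.BilinForm K V) {e₁ e₂ x p : V}
    (h₁₂ : B e₁ e₂ = 0) (h₂₁ : B e₂ e₁ = 0) (h₁ : B e₁ e₁ ≠ 0) (h₂ : B e₂ e₂ ≠ 0)
    (hp : p ∈ span K {e₁, e₂}) (horth : ∀ w ∈ span K {e₁, e₂}, B (x - p) w = 0) :
    p = (B x e₁ / B e₁ e₁) • e₁ + (B x e₂ / B e₂ e₂) • e₂ := by
  obtain ⟨a, b, rfl⟩ := mem_span_pair.mp hp
  have hx₁ := horth e₁ (subset_span (by simp))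
  have hx₂ := horth e₂ (subset_span (by simp))
  simp only [map_sub, map_add, map_smul, LinearMap.sub_apply, LinearMap.add_apply,
    LinearMap.smul_apply, smul_eq_mul, h₁₂, h₂₁, mul_zero, add_zero, zero_add,
    sub_eq_zero] at hx₁ hx₂
  rw [hx₁, hx₂, mul_div_cancel_right₀ _ h₁, mul_div_cancel_right₀ _ h₂]

def g2Form : LinearMap.BilinForm ℝ (Fin 4 → ℝ) :=
  LinearMap.mk₂ ℝ g2 (fun _ _ _ => by simp only [g2, Pi.add_apply]; ring)
    (fun _ _ _ => by simp only [g2, Pi.smul_apply, smul_eq_mul]; ring)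
    (fun _ _ _ => by simp only [g2, Pi.add_apply]; ring)
    (fun _ _ _ => by simp only [g2, Pi.smul_apply, smul_eq_mul]; ring)

@[simp]
theorem g2Form_apply (x y : Fin 4 → ℝ) : g2Form x y = g2 x y := rfl

theorem g2_tangent_self (k v : ℝ) :
    g2 ![0, k * sinh v, 1, k * cosh v] ![0, k * sinh v, 1, k * cosh v] = 1 - k ^ 2 := by
  simp only [g2, Matrix.cons_val]
  linear_combination (-k ^ 2) * cosh_sq_sub_sinh_sq v

theorem tangential_J1_smul_add {k v : ℝ} (hk : k ^ 2 ≠ 1) (P : (Fin 4 → ℝ) → (Fin 4 → ℝ))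
    (hPW : ∀ u ∈ span ℝ {![1, 0, 0, 0], ![0, k * sinh v, 1, k * cosh v]},
      P u ∈ span ℝ {![1, 0, 0, 0], ![0, k * sinh v, 1, k * cosh v]})
    (horth : ∀ u ∈ span ℝ {![1, 0, 0, 0], ![0, k * sinh v, 1, k * cosh v]},
      ∀ w ∈ span ℝ {![1, 0, 0, 0], ![0, k * sinh v, 1, k * cosh v]}, g2 (J1 u - P u) w = 0)
    (a b : ℝ) :
    P (a • ![1, 0, 0, 0] + b • ![0, k * sinh v, 1, k * cosh v]) =
      b • ![1, 0, 0, 0] + (a / (1 - k ^ 2)) • ![0, k * sinh v, 1, k * cosh v] := by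
  have hu : a • ![1, 0, 0, 0] + b • ![0, k * sinh v, 1, k * cosh v] ∈
      span ℝ {![1, 0, 0, 0], ![0, k * sinh v, 1, k * cosh v]} :=
    add_mem (smul_mem _ a (subset_span (Set.mem_insert _ _)))
      (smul_mem _ b (subset_span (Set.mem_insert_of_mem _ rfl)))
  rw [g2Form.eq_of_mem_span_pair_of_sub_orthogonal _ _ _ _ (hPW _ hu) (horth _ hu)]
  · simp only [g2Form_apply, g2_tangent_self]
    congr 2
    · simp [g2, J1]
    · simp only [g2, J1, Pi.add_apply, Pi.smul_apply, smul_eq_mul, Matrix.cons_val]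
      ring
  · simp [g2]
  · simp [g2]
  · simp [g2]
  · rw [g2Form_apply, g2_tangent_self]
    exact sub_ne_zero.mpr (Ne.symm hk)

theorem stmt_17 (k : ℝ) (hk : 1 < k) (v : ℝ) (W : Submodule ℝ (Fin 4 → ℝ))
    (hW : W = Submodule.span ℝ
      {![1, 0, 0, 0], ![0, k * Real.sinh v, 1, k * Real.cosh v]})
    (P : (Fin 4 → ℝ) → (Fin 4 → ℝ))
    (hPW : ∀ u ∈ W, P u ∈ W)
    (horth : ∀ u ∈ W, ∀ w ∈ W, g2 (J1 u - P u) w = 0) :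
    (∀ u ∈ W, P (P u) = (1 / (1 - k ^ 2)) • u) ∧
    g2 ![1, 0, 0, 0] ![1, 0, 0, 0] < 0 ∧
    g2 ![0, k * Real.sinh v, 1, k * Real.cosh v]
       ![0, k * Real.sinh v, 1, k * Real.cosh v] < 0 := by
  subst hW
  have hk2 : 1 < k ^ 2 := one_lt_pow₀ hk two_ne_zero
  have hP := tangential_J1_smul_add hk2.ne' P hPW horth
  refine ⟨fun u hu => ?_, by simp [g2], by rw [g2_tangent_self]; linarith⟩
  obtain ⟨a, b, rfl⟩ := mem_span_pair.mp hu
  rw [hP, hP, smul_add, smul_smul, smul_smul]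
  congr 2 <;> field_simp
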